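/- Let δ ≤ y < 1 satisfy the branch conditions y ≥ δ^(β1/α2), y^(α2/β1) < δ^(α1/β2), and δ^(−α1/β2)·y^(α2/β1) ≥ δ^(α1/β1) (so the g-orbit of (1, y; E) follows the state pattern E → R → S → E). If g³(1, y; E) = (1, y; E), then y = δ^((1 + β1/β2)/(1 + α2/α1)). Hence for fixed parameter values there is at most one period-two orbit of the first-return map of type E → R → S → E. -/
import Mathlib


/-- The discrete state of a cow: eating, resting (lying down), or standing. -/
inductive CowState
  | E | R | S
deriving DecidableEq

open CowState

/-- The Poincaré map `g` of the single-cow model, acting on points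
`(x, y; θ)` of the boundary of the square `[δ,1]²` together with a state label.
Powers are real powers (`Real.rpow`). -/
noncomputable def g (α1 α2 β1 β2 δ : ℝ) : ℝ × ℝ × CowState → ℝ × ℝ × CowState
  | (_x, y, .E) =>
      if δ ^ (β1 / α2) ≤ y then (y ^ (α2 / β1), 1, R)
      else (δ, δ ^ (-(β1 / α2)) * y, S)
  | (x, _y, .R) =>
      if δ ^ (α1 / β2) ≤ x then (1, x ^ (β2 / α1), E)
      else (δ ^ (-(α1 / β2)) * x, δ, S)
  | (x, y, .S) =>
      if x = δ then
        -- on the edge `x = δ`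
        (if y ≤ δ ^ (β1 / α1) then (1, δ ^ (-(β1 / α1)) * y, E)
         else (y ^ (-(α1 / β1)) * δ, 1, R))
      else
        -- on the edge `y = δ`
        (if δ ^ (α1 / β1) ≤ x then (1, x ^ (-(β1 / α1)) * δ, E)
         else (δ ^ (-(α1 / β1)) * x, 1, R))

/-- The Poincaré section `Σ = {(1,y;E) : δ ≤ y ≤ 1} ∪ {(x,1;R) : δ ≤ x < 1}`. -/
def inSigma (δ : ℝ) : ℝ × ℝ × CowState → Prop
  | (x, y, .E) => x = 1 ∧ δ ≤ y ∧ y ≤ 1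
  | (x, y, .R) => δ ≤ x ∧ x < 1 ∧ y = 1
  | (_, _, .S) => False

/-- The first-return map `f` on the Poincaré section `Σ`:
`f(w) = g(w)` if `g(w) ∈ Σ`, and `f(w) = g(g(w))` otherwise. -/
noncomputable def f (α1 α2 β1 β2 δ : ℝ) (w : ℝ × ℝ × CowState) : ℝ × ℝ × CowState := by
  classical
  exact if inSigma δ (g α1 α2 β1 β2 δ w) then g α1 α2 β1 β2 δ w
        else g α1 α2 β1 β2 δ (g α1 α2 β1 β2 δ w)

/-- if `δ ≤ y < 1` satisfies the branch conditions
`y ≥ δ^(β1/α2)`, `y^(α2/β1) < δ^(α1/β2)`, and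
`δ^(−α1/β2)·y^(α2/β1) ≥ δ^(α1/β1)` (state pattern E → R → S → E), and
`g³(1,y;E) = (1,y;E)`, then `y = δ^((1+β1/β2)/(1+α2/α1))`.  Hence for fixed
parameters there is at most one period-two orbit of the first-return map of
type E → R → S → E. -/
theorem period_two_ERSE_unique
    (α1 α2 β1 β2 δ : ℝ)
    (hα1 : 0 < α1) (hα2 : 0 < α2) (hβ1 : 0 < β1) (hβ2 : 0 < β2)
    (hδ0 : 0 < δ) (hδ1 : δ < 1)
    (y : ℝ) (hyl : δ ≤ y) (hyu : y < 1)
    (hb1 : δ ^ (β1 / α2) ≤ y)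
    (hb2 : y ^ (α2 / β1) < δ ^ (α1 / β2))
    (hb3 : δ ^ (α1 / β1) ≤ δ ^ (-(α1 / β2)) * y ^ (α2 / β1))
    (hfix : (g α1 α2 β1 β2 δ)^[3] (1, y, E) = (1, y, E)) :
    y = δ ^ ((1 + β1 / β2) / (1 + α2 / α1)) := by
  have hy0 : 0 < y := lt_of_lt_of_le hδ0 hyl
  set x := δ ^ (-(α1 / β2)) * y ^ (α2 / β1) with hxdef
  have hx0 : 0 < x := mul_pos (Real.rpow_pos_of_pos hδ0 _) (Real.rpow_pos_of_pos hy0 _)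
  -- unfold the three iterations
  have h3 : (g α1 α2 β1 β2 δ)^[3] (1, y, E)
      = g α1 α2 β1 β2 δ (g α1 α2 β1 β2 δ (g α1 α2 β1 β2 δ (1, y, E))) := by
    simp [Function.iterate_succ, Function.comp]
  rw [h3] at hfix
  have h1 : g α1 α2 β1 β2 δ (1, y, E) = (y ^ (α2 / β1), 1, R) := by
    simp [g, hb1]
  rw [h1] at hfix
  have h2 : g α1 α2 β1 β2 δ (y ^ (α2 / β1), 1, R) = (x, δ, S) := by
    simp [g, not_le.mpr hb2, hxdef]
  rw [h2] at hfix
  -- extract the fixed-point equation y = x^(−β1/α1) * δ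
  have hy : y = x ^ (-(β1 / α1)) * δ := by
    by_cases hxδ : x = δ
    · simp only [g, hxδ, if_pos rfl, if_true] at hfix
      by_cases hc : δ ≤ δ ^ (β1 / α1)
      · simp only [if_pos hc] at hfix
        have h := congrArg (fun p : ℝ × ℝ × CowState => p.2.1) hfix
        simp only at h
        rw [hxδ, ← h]
      · simp only [if_neg hc] at hfix
        have h := congrArg (fun p : ℝ × ℝ × CowState => p.2.2) hfix
        simp only at h
        exact absurd h (by simp)
    · simp only [g, if_neg hxδ, if_pos hb3] at hfix
      have h := congrArg (fun p : ℝ × ℝ × CowState => p.2.1) hfix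
      simp only at h
      exact h.symm
  -- take logarithms
  set L := Real.log δ with hL
  set M := Real.log y with hM
  have hlx : Real.log x = -(α1 / β2) * L + α2 / β1 * M := by
    rw [hxdef, Real.log_mul (ne_of_gt (Real.rpow_pos_of_pos hδ0 _))
      (ne_of_gt (Real.rpow_pos_of_pos hy0 _)), Real.log_rpow hδ0, Real.log_rpow hy0]
  have hly : M = -(β1 / α1) * Real.log x + L := by
    rw [hM, hy, Real.log_mul (ne_of_gt (Real.rpow_pos_of_pos hx0 _)) (ne_of_gt hδ0),
      Real.log_rpow hx0]
  rw [hlx] at hly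
  have hkey : M = L * ((1 + β1 / β2) / (1 + α2 / α1)) := by
    have h1 : (0:ℝ) < 1 + α2 / α1 := by positivity
    field_simp at hly ⊢
    nlinarith [hly]
  have : y = Real.exp M := (Real.exp_log hy0).symm
  rw [this, Real.rpow_def_of_pos hδ0, hkey]
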